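/- arXiv:2501.02899 — 5 statements merged into one kernel-verified Lean document; each statement's English description precedes it below -/
import Mathlib

section
/- In the scalar case, define g_q(x) = Q + a²x − (1−q)a²b²x²/(R + b²x) for x ≥ 0, where a, b, Q, R > 0 and q ∈ [0,1). Then g_q is monotonically nondecreasing in x on [0, ∞) and monotonically nondecreasing in q. -/
/-!
Splitting off the fraction, `g_q(x) = Q + q a²x + (1 − q) a²R · x / (R + b²x)`: for `q ∈ [0, 1]`
both weights are nonnegative and `x ↦ x / (R + b²x)` is increasing on `[0, ∞)`, so `g_q` is
monotone in `x`. In `q` the operator is affine with slope `a²b²x²/(R + b²x) ≥ 0`.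
-/

open Set

lemma monotoneOn_div_const_add_mul {R c : ℝ} (hR : 0 < R) (hc : 0 ≤ c) :
    MonotoneOn (fun x : ℝ => x / (R + c * x)) (Ici 0) := by
  intro x hx y hy hxy
  have hDx : 0 < R + c * x := by have : 0 ≤ c * x := mul_nonneg hc hx; linarith
  have hDy : 0 < R + c * y := by have : 0 ≤ c * y := mul_nonneg hc hy; linarith
  rw [div_le_div_iff₀ hDx hDy]
  nlinarith

/-- `g_q(x)`, with `q` the packet loss rate. -/
noncomputable def modifiedRiccati (a b Q R q x : ℝ) : ℝ :=
  Q + a^2*x - (1 - q) * (a^2*b^2*x^2/(R + b^2*x))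

lemma modifiedRiccati_eq {a b Q R q x : ℝ} (hD : R + b^2*x ≠ 0) :
    modifiedRiccati a b Q R q x = Q + q * (a^2*x) + (1 - q) * (a^2*R * (x / (R + b^2*x))) := by
  have hsplit : a^2*b^2*x^2/(R + b^2*x) = a^2*x - a^2*R * (x / (R + b^2*x)) := by
    field_simp
    ring
  rw [modifiedRiccati, hsplit]
  ring

lemma modifiedRiccati_monotoneOn {a b Q R q : ℝ} (hR : 0 < R) (hq₀ : 0 ≤ q) (hq₁ : q ≤ 1) :
    MonotoneOn (modifiedRiccati a b Q R q) (Ici 0) := by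
  intro x hx y hy hxy
  have hD : ∀ z ∈ Ici (0:ℝ), R + b^2*z ≠ 0 := fun z hz => by
    have : 0 ≤ b^2*z := mul_nonneg (sq_nonneg b) hz
    linarith
  have hfrac := monotoneOn_div_const_add_mul hR (sq_nonneg b) hx hy hxy
  rw [modifiedRiccati_eq (hD x hx), modifiedRiccati_eq (hD y hy)]
  have : 0 ≤ 1 - q := by linarith
  gcongr

lemma modifiedRiccati_mono_lossRate {a b Q R x q q' : ℝ} (hR : 0 ≤ R) (hx : 0 ≤ x) (hqq : q ≤ q') :
    modifiedRiccati a b Q R q x ≤ modifiedRiccati a b Q R q' x := by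
  unfold modifiedRiccati
  gcongr

theorem stmt_4_general (a b Q R : ℝ)
    (hR : 0 < R) :
    (∀ q ∈ Set.Ico (0:ℝ) 1,
      MonotoneOn (fun x : ℝ => Q + a^2*x - (1 - q) * (a^2*b^2*x^2/(R + b^2*x)))
        (Set.Ici 0))
    ∧ (∀ x : ℝ, 0 ≤ x → ∀ q ∈ Set.Ico (0:ℝ) 1, ∀ q' ∈ Set.Ico (0:ℝ) 1, q ≤ q' →
        Q + a^2*x - (1 - q) * (a^2*b^2*x^2/(R + b^2*x))
          ≤ Q + a^2*x - (1 - q') * (a^2*b^2*x^2/(R + b^2*x))) :=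
  ⟨fun _ hq => modifiedRiccati_monotoneOn hR hq.1 hq.2.le,
    fun _ hx _ _ _ _ hqq => modifiedRiccati_mono_lossRate hR.le hx hqq⟩

/-- The scalar modified Riccati operator `g_q(x) = Q + a²x − (1−q)a²b²x²/(R+b²x)`
is monotone nondecreasing in `x` on `[0,∞)` and monotone nondecreasing in `q`. -/
theorem stmt_4 (a b Q R : ℝ)
    (ha : 0 < a) (hb : 0 < b) (hQ : 0 < Q) (hR : 0 < R) :
    (∀ q ∈ Set.Ico (0:ℝ) 1,
      MonotoneOn (fun x : ℝ => Q + a^2*x - (1 - q) * (a^2*b^2*x^2/(R + b^2*x)))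
        (Set.Ici 0))
    ∧ (∀ x : ℝ, 0 ≤ x → ∀ q ∈ Set.Ico (0:ℝ) 1, ∀ q' ∈ Set.Ico (0:ℝ) 1, q ≤ q' →
        Q + a^2*x - (1 - q) * (a^2*b^2*x^2/(R + b^2*x))
          ≤ Q + a^2*x - (1 - q') * (a^2*b^2*x^2/(R + b^2*x))) :=
  stmt_4_general a b Q R hR
end

section
/- Let a, b, Q, R > 0, and let 0 ≤ q̂ < q < 1 be such that the fixed-point equations P = g_q(P) and P̂ = g_{q̂}(P̂) have (unique) positive solutions, where g_s(x) = Q + a²x − (1−s)a²b²x²/(R + b²x). Then P̂ ≤ P. -/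
/-! If `P` is the fixed point for loss rate `q`, then the Riccati map for the smaller
rate `q̂` sends `P` to at most `P`, while it sends `0` to `Q > 0`. By the intermediate
value theorem it has a fixed point in `(0, P]`, which by uniqueness is `P̂`. -/

open Set

/-- The map `g_s` of the modified Riccati equation `P = g_s(P)`. -/
noncomputable def riccatiMap (a b Q R s x : ℝ) : ℝ :=
  Q + a^2*x - (1 - s) * (a^2*b^2*x^2/(R + b^2*x))

section

variable {a b Q R : ℝ}

theorem riccatiMap_zero (s : ℝ) : riccatiMap a b Q R s 0 = Q := by
  simp [riccatiMap]

theorem continuousOn_riccatiMap (hR : 0 < R) (s : ℝ) :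
    ContinuousOn (riccatiMap a b Q R s) (Ici 0) := by
  refine ContinuousOn.sub (by fun_prop) (continuousOn_const.mul (ContinuousOn.div
    (by fun_prop) (by fun_prop) fun x (hx : 0 ≤ x) => ?_))
  positivity

theorem riccatiMap_mono_rate (hR : 0 ≤ R) {x : ℝ} (hx : 0 ≤ x) {s q : ℝ} (hsq : s ≤ q) :
    riccatiMap a b Q R s x ≤ riccatiMap a b Q R q x := by
  have : 0 ≤ a^2*b^2*x^2/(R + b^2*x) := by positivity
  unfold riccatiMap
  nlinarith

end

theorem exists_fixedPoint_mem_Ioc {g : ℝ → ℝ} {l u : ℝ} (hlu : l ≤ u)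
    (hg : ContinuousOn g (Icc l u)) (hl : l < g l) (hu : g u ≤ u) :
    ∃ c ∈ Ioc l u, g c = c := by
  obtain ⟨c, hc, hgc⟩ := intermediate_value_Icc' hlu (hg.sub continuousOn_id)
    (show (0 : ℝ) ∈ Icc (g u - u) (g l - l) from ⟨by linarith, by linarith⟩)
  refine ⟨c, ⟨lt_of_le_of_ne hc.1 ?_, hc.2⟩, sub_eq_zero.mp hgc⟩
  rintro rfl
  simp only [Pi.sub_apply, id] at hgc
  linarith

theorem stmt_5_general (a b Q R q qhat P Phat : ℝ)
    (hQ : 0 < Q) (hR : 0 < R)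
    (hlt : qhat < q)
    (hP : 0 < P)
    (hPfix : P = Q + a^2*P - (1 - q) * (a^2*b^2*P^2/(R + b^2*P)))
    (hPhatuniq : ∀ x : ℝ, 0 < x →
      x = Q + a^2*x - (1 - qhat) * (a^2*b^2*x^2/(R + b^2*x)) → x = Phat) :
    Phat ≤ P := by
  have hgP : riccatiMap a b Q R qhat P ≤ P :=
    (riccatiMap_mono_rate hR.le hP.le hlt.le).trans_eq hPfix.symm
  have hg0 : (0 : ℝ) < riccatiMap a b Q R qhat 0 := by rwa [riccatiMap_zero]
  obtain ⟨c, ⟨hc0, hcP⟩, hc⟩ := exists_fixedPoint_mem_Ioc hP.le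
    ((continuousOn_riccatiMap hR qhat).mono Icc_subset_Ici_self) hg0 hgP
  exact hPhatuniq c hc0 hc.symm ▸ hcP

/-- Monotonicity of the positive solution of the scalar modified Riccati
equation in the packet loss rate: if `qhat < q` then `Phat ≤ P`. -/
theorem stmt_5 (a b Q R q qhat P Phat : ℝ)
    (ha : 0 < a) (hb : 0 < b) (hQ : 0 < Q) (hR : 0 < R)
    (hqhat0 : 0 ≤ qhat) (hlt : qhat < q) (hq1 : q < 1)
    (hP : 0 < P)
    (hPfix : P = Q + a^2*P - (1 - q) * (a^2*b^2*P^2/(R + b^2*P)))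
    (hPuniq : ∀ x : ℝ, 0 < x →
      x = Q + a^2*x - (1 - q) * (a^2*b^2*x^2/(R + b^2*x)) → x = P)
    (hPhat : 0 < Phat)
    (hPhatfix : Phat = Q + a^2*Phat - (1 - qhat) * (a^2*b^2*Phat^2/(R + b^2*Phat)))
    (hPhatuniq : ∀ x : ℝ, 0 < x →
      x = Q + a^2*x - (1 - qhat) * (a^2*b^2*x^2/(R + b^2*x)) → x = Phat) :
    Phat ≤ P :=
  stmt_5_general a b Q R q qhat P Phat hQ hR hlt hP hPfix hPhatuniq
end

section
/- Let a, b, Q, R > 0 and q ∈ (0, 1/a²), and suppose P > 0 solves P = Q + a²P − (1−q)a²b²P²/(R + b²P). If 0 ≤ q − q̂ ≤ Q(R + b²P)/(a²b²P²) + (1−q)R/(R + b²P) and P̂ > 0 solves the same equation with q̂ in place of q, then Q + (1−q)R·(abP̂/(R + b²P̂))² + (q̂−q)a²b²P̂²/(R + b²P̂) > 0. -/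
/-!
Multiplying out, the criterion at `x = P̂` is positive exactly when `q - q̂ < f_q(P̂)`, where
`f_q = stabilityThreshold … q`. On a solution `x` of the Riccati equation with parameter `q`,
`f_q(x)` equals `h_q(x) = 1/a² - q + QR/(a²b²x²)` (`reducedThreshold`), which is positive and decreasing in `x`
(unlike `f_q` itself, which need not be monotone when `q > 1`). Solutions of the Riccati equation
decrease as the parameter grows, so `P̂ ≤ P` and `q - q̂ ≤ f_q(P) = h_q(P) ≤ h_q(P̂)`. Finally,
`P̂` solves the equation for `q̂`, so `f_q(P̂) - (q - q̂) = h_q(P̂) - (q - q̂)·R/(R + b²P̂) > 0`.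
-/

noncomputable section

def IsRiccatiFixedPoint (a b Q R q x : ℝ) : Prop :=
  x = Q + a^2*x - (1 - q) * (a^2*b^2*x^2/(R + b^2*x))

def stabilityThreshold (a b Q R q x : ℝ) : ℝ :=
  Q*(R + b^2*x)/(a^2*b^2*x^2) + (1 - q)*R/(R + b^2*x)

def reducedThreshold (a b Q R q x : ℝ) : ℝ :=
  1 / a^2 - q + Q*R/(a^2*b^2*x^2)

end

variable {a b Q R q q' x y : ℝ}

namespace IsRiccatiFixedPoint

theorem cleared (h : IsRiccatiFixedPoint a b Q R q x) (hS : R + b^2*x ≠ 0) :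
    b^2*(1 - a^2*q)*x^2 + (1 - a^2)*R*x = Q*(R + b^2*x) := by
  unfold IsRiccatiFixedPoint at h
  have hcancel : (1 - q) * (a^2*b^2*x^2/(R + b^2*x)) * (R + b^2*x) = (1 - q)*a^2*b^2*x^2 := by
    field_simp
  linear_combination (R + b^2*x) * h - hcancel

theorem le_of_le (hx : IsRiccatiFixedPoint a b Q R q x) (hy : IsRiccatiFixedPoint a b Q R q' y)
    (hqq' : q' ≤ q) (hQ : 0 < Q) (hR : 0 < R) (haq : a^2*q ≤ 1) (hx0 : 0 < x) (hy0 : 0 < y) :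
    y ≤ x := by
  have hfactor : (x - y) * (b^2*(1 - a^2*q)*x*y + Q*R) = a^2*b^2*(q - q')*x*y^2 := by
    linear_combination y * hx.cleared (by positivity) - x * hy.cleared (by positivity)
  have hq : 0 ≤ 1 - a^2*q := by linarith
  have hq' : 0 ≤ q - q' := by linarith
  have hpos : 0 < b^2*(1 - a^2*q)*x*y + Q*R := by positivity
  have hprod : 0 ≤ (x - y) * (b^2*(1 - a^2*q)*x*y + Q*R) := by rw [hfactor]; positivity
  linarith [(mul_nonneg_iff_of_pos_right hpos).1 hprod]

theorem stabilityThreshold_eq (h : IsRiccatiFixedPoint a b Q R q x) (ha : a ≠ 0) (hb : b ≠ 0)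
    (hx : x ≠ 0) (hS : R + b^2*x ≠ 0) :
    stabilityThreshold a b Q R q x = reducedThreshold a b Q R q x := by
  have hdiff : stabilityThreshold a b Q R q x - reducedThreshold a b Q R q x
      = (Q*(R + b^2*x) - (b^2*(1 - a^2*q)*x^2 + (1 - a^2)*R*x)) / (a^2*x*(R + b^2*x)) := by
    unfold stabilityThreshold reducedThreshold
    field_simp
    ring
  rw [← sub_eq_zero, hdiff, ← h.cleared hS, sub_self, zero_div]

end IsRiccatiFixedPoint

theorem stabilityThreshold_sub_stabilityThreshold :
    stabilityThreshold a b Q R q x - stabilityThreshold a b Q R q' x = (q' - q)*R/(R + b^2*x) := by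
  unfold stabilityThreshold
  ring

theorem reducedThreshold_eq_add_sub :
    reducedThreshold a b Q R q' x = reducedThreshold a b Q R q x + (q - q') := by
  unfold reducedThreshold
  ring

theorem reducedThreshold_pos (hQ : 0 < Q) (hR : 0 < R) (hq : q < 1 / a^2) :
    0 < reducedThreshold a b Q R q x := by
  unfold reducedThreshold
  have hfrac : 0 ≤ Q*R/(a^2*b^2*x^2) := by positivity
  linarith

theorem reducedThreshold_antitoneOn (hQ : 0 ≤ Q) (hR : 0 ≤ R) (ha : a ≠ 0) (hb : b ≠ 0) :
    AntitoneOn (reducedThreshold a b Q R q) (Set.Ioi 0) := by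
  intro x (hx : 0 < x) y _ hxy
  unfold reducedThreshold
  gcongr

theorem stabilization_criterion_pos (ha : a ≠ 0) (hb : b ≠ 0) (hx : x ≠ 0) (hS : 0 < R + b^2*x)
    (h : q - q' < stabilityThreshold a b Q R q x) :
    0 < Q + (1 - q) * R * (a*b*x/(R + b^2*x))^2 + (q' - q) * (a^2*b^2*x^2/(R + b^2*x)) := by
  have hfactor : Q + (1 - q) * R * (a*b*x/(R + b^2*x))^2 + (q' - q) * (a^2*b^2*x^2/(R + b^2*x))
      = a^2*b^2*x^2/(R + b^2*x) * (stabilityThreshold a b Q R q x - (q - q')) := by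
    unfold stabilityThreshold
    field_simp
    ring
  rw [hfactor]
  exact mul_pos (by positivity) (sub_pos.2 h)

/-- Scalar stability-threshold lower bound: if the estimation error `q - qhat`
is below the explicit threshold evaluated at `P`, the certainty-equivalence
stabilization criterion holds. -/
theorem stmt_6 (a b Q R q qhat P Phat : ℝ)
    (ha : 0 < a) (hb : 0 < b) (hQ : 0 < Q) (hR : 0 < R)
    (hq : q ∈ Set.Ioo (0:ℝ) (1/a^2))
    (hP : 0 < P)
    (hric : P = Q + a^2*P - (1 - q) * (a^2*b^2*P^2/(R + b^2*P)))
    (herr : 0 ≤ q - qhat)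
    (herr2 : q - qhat ≤ Q*(R + b^2*P)/(a^2*b^2*P^2) + (1 - q)*R/(R + b^2*P))
    (hPhat : 0 < Phat)
    (hrichat : Phat = Q + a^2*Phat - (1 - qhat) * (a^2*b^2*Phat^2/(R + b^2*Phat))) :
    0 < Q + (1 - q) * R * (a*b*Phat/(R + b^2*Phat))^2
        + (qhat - q) * (a^2*b^2*Phat^2/(R + b^2*Phat)) := by
  obtain ⟨-, hqa⟩ := hq
  have haq : a^2*q ≤ 1 := by
    rw [lt_div_iff₀ (by positivity)] at hqa
    linarith
  have hS : 0 < R + b^2*Phat := by positivity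
  have hPhatP : Phat ≤ P :=
    IsRiccatiFixedPoint.le_of_le hric hrichat (sub_nonneg.1 herr) hQ hR haq hP hPhat
  have hle : q - qhat ≤ reducedThreshold a b Q R q Phat :=
    calc q - qhat ≤ stabilityThreshold a b Q R q P := herr2
      _ = reducedThreshold a b Q R q P :=
        IsRiccatiFixedPoint.stabilityThreshold_eq hric ha.ne' hb.ne' hP.ne' (by positivity)
      _ ≤ reducedThreshold a b Q R q Phat :=
        reducedThreshold_antitoneOn hQ.le hR.le ha.ne' hb.ne' hPhat hP hPhatP
  have hmargin : 0 < reducedThreshold a b Q R q Phat := reducedThreshold_pos hQ hR hqa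
  have hRS : R/(R + b^2*Phat) < 1 := (div_lt_one hS).2 (lt_add_of_pos_right R (by positivity))
  refine stabilization_criterion_pos ha.ne' hb.ne' hPhat.ne' hS ?_
  calc q - qhat
      < q - qhat + (reducedThreshold a b Q R q Phat - (q - qhat)*(R/(R + b^2*Phat))) := by
        have hscaled := mul_le_mul_of_nonneg_right hle (by positivity : 0 ≤ R/(R + b^2*Phat))
        linarith [mul_lt_of_lt_one_right hmargin hRS]
    _ = stabilityThreshold a b Q R q Phat := by
        rw [← sub_add_cancel (stabilityThreshold a b Q R q Phat)
          (stabilityThreshold a b Q R qhat Phat), stabilityThreshold_sub_stabilityThreshold,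
          IsRiccatiFixedPoint.stabilityThreshold_eq hrichat ha.ne' hb.ne' hPhat.ne' hS.ne',
          reducedThreshold_eq_add_sub (q := q) (q' := qhat)]
        ring
end

section
/- Suppose the scalar closed loop x_{t+1} = (a + λ_t b K̂)x_t with i.i.d. Bernoulli dropout (P(λ_t=0)=q) is mean-square stable, K̂ = −abP̂/(R + b²P̂), and P̂ > 0 solves P̂ = Q + a²P̂ − (1−q̂)a²b²P̂²/(R + b²P̂). Then the infinite-horizon cost J = E[Σ_{t≥0} Q x_t² + λ_t R K̂² x_t²] equals P̂·E[x_0²] + (q − q̂)·(a²b²P̂²/(R + b²P̂))·Σ_{t≥0} E[x_t²]. -/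
/-! With `S t = E[x_t²]`, independence of the Bernoulli gain `λ_t` from `x_t` gives
`S (t+1) = ρ S t` with `ρ = q a² + (1-q)(a+bK̂)²`, and the expected stage cost is
`(Q + (1-q) R K̂²) S t`. Mean-square stability forces `S` to be a summable geometric sequence with
`(1-ρ) ∑ S = S 0`, and the Riccati equation rewrites the stage coefficient as
`P̂ (1-ρ) + (q - q̂) a²b²P̂²/(R + b²P̂)`. -/

open MeasureTheory ProbabilityTheory Filter Topology

lemma abs_add_mul_le_of_eq_zero_or_eq_one {l : ℝ} (hl : l = 0 ∨ l = 1) (c d : ℝ) :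
    |c + l * d| ≤ |c| + |d| := by
  rcases hl with rfl | rfl
  · simp
  · simpa using abs_add_le c d

section Integral

variable {Ω : Type*} [MeasurableSpace Ω] {μ : Measure Ω}

lemma integral_eq_one_sub_measureReal_of_ae_eq_zero_or_eq_one [IsProbabilityMeasure μ]
    {L : Ω → ℝ} (hL : Measurable L) (h01 : ∀ᵐ ω ∂μ, L ω = 0 ∨ L ω = 1) :
    ∫ ω, L ω ∂μ = 1 - μ.real {ω | L ω = 0} := by
  have hzero : MeasurableSet {ω | L ω = 0} := hL (measurableSet_singleton 0)
  have hind : L =ᵐ[μ] {ω | L ω = 0}ᶜ.indicator 1 := by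
    filter_upwards [h01] with ω hω
    rcases hω with h | h <;> simp [Set.indicator, h]
  rw [integral_congr_ae hind, integral_indicator_one hzero.compl,
    probReal_compl_eq_one_sub hzero]

lemma ProbabilityTheory.IndepFun.integral_add_mul_mul {L Y : Ω → ℝ} (hind : IndepFun L Y μ)
    (hL : Integrable L μ) (hY : Integrable Y μ) (c d : ℝ) :
    ∫ ω, (c + L ω * d) * Y ω ∂μ = (c + (∫ ω, L ω ∂μ) * d) * ∫ ω, Y ω ∂μ := by
  have hLY : Integrable (fun ω => L ω * Y ω) μ := hind.integrable_mul hL hY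
  have hsplit : (fun ω => (c + L ω * d) * Y ω) = fun ω => c * Y ω + d * (L ω * Y ω) := by
    funext ω; ring
  rw [hsplit, integral_add (hY.const_mul c) (hLY.const_mul d), integral_const_mul,
    integral_const_mul,
    hind.integral_fun_mul_eq_mul_integral hL.aestronglyMeasurable hY.aestronglyMeasurable]
  ring

lemma integral_tsum_of_ae_norm_le {f Y : ℕ → Ω → ℝ} (hf : ∀ t, AEStronglyMeasurable (f t) μ)
    (hY : ∀ t, Integrable (Y t) μ)
    (hle : ∀ t, ∀ᵐ ω ∂μ, ‖f t ω‖ ≤ Y t ω) (hsum : Summable fun t => ∫ ω, Y t ω ∂μ) :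
    ∫ ω, ∑' t, f t ω ∂μ = ∑' t, ∫ ω, f t ω ∂μ := by
  have hfi : ∀ t, Integrable (f t) μ := fun t => (hY t).mono' (hf t) (hle t)
  refine (integral_tsum_of_summable_integral_norm hfi (hsum.of_nonneg_of_le
    (fun t => integral_nonneg fun ω => norm_nonneg _) fun t => ?_)).symm
  exact integral_mono_ae (hfi t).norm (hY t) (hle t)

end Integral

lemma summable_of_succ_eq_mul_of_tendsto_zero {S : ℕ → ℝ} {ρ : ℝ}
    (hS : ∀ t, S (t + 1) = ρ * S t) (hlim : Tendsto S atTop (𝓝 0)) : Summable S := by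
  have hgeom : S = fun t => S 0 * ρ ^ t := by
    funext t
    induction t with
    | zero => simp
    | succ t ih => rw [hS, ih, pow_succ]; ring
  rcases eq_or_ne (S 0) 0 with h0 | h0
  · rw [hgeom, h0]; simp
  have hpow : Tendsto (fun t : ℕ => ρ ^ t) atTop (𝓝 0) := by
    have := hlim.const_mul (S 0)⁻¹
    rw [hgeom] at this
    simpa [← mul_assoc, inv_mul_cancel₀ h0] using this
  rw [hgeom]
  exact (summable_geometric_of_abs_lt_one (tendsto_pow_atTop_nhds_zero_iff.mp hpow)).mul_left _

lemma one_sub_mul_tsum_of_succ_eq_mul {S : ℕ → ℝ} {ρ : ℝ} (hS : ∀ t, S (t + 1) = ρ * S t)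
    (hsum : Summable S) : (1 - ρ) * ∑' t, S t = S 0 := by
  have h := hsum.tsum_eq_zero_add
  simp only [hS, tsum_mul_left] at h
  linarith

section ClosedLoop

variable {Ω : Type*} [MeasurableSpace Ω] {μ : Measure Ω} {lam x : ℕ → Ω → ℝ} {a k q : ℝ}

lemma memLp_two_of_succ_eq_add_mul (hlam : ∀ t, Measurable (lam t))
    (hBern : ∀ t, ∀ᵐ ω ∂μ, lam t ω = 0 ∨ lam t ω = 1)
    (hdyn : ∀ t ω, x (t + 1) ω = (a + lam t ω * k) * x t ω) (hx0 : MemLp (x 0) 2 μ) (t : ℕ) :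
    MemLp (x t) 2 μ := by
  induction t with
  | zero => exact hx0
  | succ t ih =>
    have hgain : MemLp (fun ω => a + lam t ω * k) ⊤ μ :=
      memLp_top_of_bound (((hlam t).mul_const k).const_add a).aestronglyMeasurable (|a| + |k|)
        (by filter_upwards [hBern t] with ω hω using abs_add_mul_le_of_eq_zero_or_eq_one hω a k)
    rw [show x (t + 1) = _ from funext (hdyn t)]
    exact ih.mul' hgain

variable [IsProbabilityMeasure μ] (hlam : ∀ t, Measurable (lam t))
  (hBern : ∀ t, ∀ᵐ ω ∂μ, lam t ω = 0 ∨ lam t ω = 1)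
  (hmean : ∀ t, ∫ ω, lam t ω ∂μ = 1 - q) (hind : ∀ t, IndepFun (lam t) (x t) μ)
  (hL2 : ∀ t, MemLp (x t) 2 μ)
include hlam hBern hmean hind hL2

lemma integral_add_mul_mul_sq (t : ℕ) (c d : ℝ) :
    ∫ ω, (c + lam t ω * d) * x t ω ^ 2 ∂μ = (c + (1 - q) * d) * ∫ ω, x t ω ^ 2 ∂μ := by
  have hlamInt : Integrable (lam t) μ :=
    Integrable.of_bound (hlam t).aestronglyMeasurable 1 (by
      filter_upwards [hBern t] with ω hω
      rcases hω with h | h <;> simp [h])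
  rw [← hmean t]
  exact ((hind t).comp measurable_id (measurable_id.pow_const 2)).integral_add_mul_mul hlamInt
    (hL2 t).integrable_sq c d

lemma integral_sq_succ (hdyn : ∀ t ω, x (t + 1) ω = (a + lam t ω * k) * x t ω) (t : ℕ) :
    ∫ ω, x (t + 1) ω ^ 2 ∂μ = (q * a ^ 2 + (1 - q) * (a + k) ^ 2) * ∫ ω, x t ω ^ 2 ∂μ := by
  have hsq : (fun ω => x (t + 1) ω ^ 2)
      =ᵐ[μ] fun ω => (a ^ 2 + lam t ω * ((a + k) ^ 2 - a ^ 2)) * x t ω ^ 2 := by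
    filter_upwards [hBern t] with ω hω
    rcases hω with h | h <;> simp only [hdyn, h] <;> ring
  rw [integral_congr_ae hsq, integral_add_mul_mul_sq hlam hBern hmean hind hL2]
  ring

lemma integral_tsum_add_mul_mul_sq (c d : ℝ) (hsum : Summable fun t => ∫ ω, x t ω ^ 2 ∂μ) :
    ∫ ω, ∑' t, (c + lam t ω * d) * x t ω ^ 2 ∂μ
      = (c + (1 - q) * d) * ∑' t, ∫ ω, x t ω ^ 2 ∂μ := by
  rw [integral_tsum_of_ae_norm_le (Y := fun t ω => (|c| + |d|) * x t ω ^ 2), ← tsum_mul_left]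
  · exact tsum_congr (integral_add_mul_mul_sq hlam hBern hmean hind hL2 · c d)
  · exact fun t => (((hlam t).mul_const d).const_add c).aestronglyMeasurable.mul
      ((hL2 t).1.pow 2)
  · exact fun t => (hL2 t).integrable_sq.const_mul _
  · intro t
    filter_upwards [hBern t] with ω hω
    rw [norm_mul, Real.norm_eq_abs, Real.norm_eq_abs, abs_pow, sq_abs]
    exact mul_le_mul_of_nonneg_right (abs_add_mul_le_of_eq_zero_or_eq_one hω c d) (sq_nonneg _)
  · simpa only [integral_const_mul] using hsum.mul_left (|c| + |d|)

end ClosedLoop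

lemma riccati_stage_cost (a b Q R q qhat P K : ℝ)
    (hric : P = Q + a^2*P - (1 - qhat) * (a^2*b^2*P^2/(R + b^2*P)))
    (hK : K = -(a*b*P/(R + b^2*P))) :
    Q + (1 - q) * (R * K^2) = P * (1 - (q * a^2 + (1 - q) * (a + b * K)^2))
      + (q - qhat) * (a^2*b^2*P^2/(R + b^2*P)) := by
  obtain ⟨M, rfl⟩ : ∃ M, R = M - b^2*P := ⟨R + b^2*P, by ring⟩
  rw [sub_add_cancel] at hric hK ⊢
  subst hK
  rcases eq_or_ne M 0 with rfl | hM
  · simp only [div_zero] at hric ⊢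
    linear_combination -hric
  · field_simp at hric ⊢
    linear_combination (-M) * hric

theorem stmt_15_general {Ω : Type*} [MeasurableSpace Ω] (μ : Measure Ω) [IsProbabilityMeasure μ]
    (a b Q R q qhat Phat K : ℝ)
    (hq : q ∈ Set.Ioo (0:ℝ) 1)
    (hric : Phat = Q + a^2*Phat - (1 - qhat) * (a^2*b^2*Phat^2/(R + b^2*Phat)))
    (hK : K = -(a*b*Phat/(R + b^2*Phat)))
    (lam : ℕ → Ω → ℝ) (x : ℕ → Ω → ℝ)
    (hlam : ∀ t, Measurable (lam t))
    (hBern : ∀ t, ∀ᵐ ω ∂μ, lam t ω = 0 ∨ lam t ω = 1)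
    (h0 : ∀ t, μ {ω | lam t ω = 0} = ENNReal.ofReal q)
    (hindep : ∀ t, IndepFun (lam t) (x t) μ)
    (hx0L2 : MemLp (x 0) 2 μ)
    (hdyn : ∀ t ω, x (t+1) ω = (a + lam t ω * b * K) * x t ω)
    (hms : Tendsto (fun t => ∫ ω, (x t ω)^2 ∂μ) atTop (nhds 0)) :
    ∫ ω, (∑' t : ℕ, (Q * (x t ω)^2 + lam t ω * R * K^2 * (x t ω)^2)) ∂μ
      = Phat * (∫ ω, (x 0 ω)^2 ∂μ)
        + (q - qhat) * (a^2*b^2*Phat^2/(R + b^2*Phat)) * ∑' t : ℕ, ∫ ω, (x t ω)^2 ∂μ := by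
  have hmean : ∀ t, ∫ ω, lam t ω ∂μ = 1 - q := fun t => by
    rw [integral_eq_one_sub_measureReal_of_ae_eq_zero_or_eq_one (hlam t) (hBern t),
      measureReal_def, h0 t, ENNReal.toReal_ofReal hq.1.le]
  have hdyn' : ∀ t ω, x (t + 1) ω = (a + lam t ω * (b * K)) * x t ω := fun t ω => by
    rw [hdyn, mul_assoc]
  have hL2 := memLp_two_of_succ_eq_add_mul hlam hBern hdyn' hx0L2
  have hstep := integral_sq_succ hlam hBern hmean hindep hL2 hdyn'
  have hsum := summable_of_succ_eq_mul_of_tendsto_zero hstep hms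
  have hcost : ∀ t ω, Q * x t ω ^ 2 + lam t ω * R * K ^ 2 * x t ω ^ 2
      = (Q + lam t ω * (R * K ^ 2)) * x t ω ^ 2 := fun t ω => by ring
  simp_rw [hcost]
  rw [integral_tsum_add_mul_mul_sq hlam hBern hmean hindep hL2 _ _ hsum,
    riccati_stage_cost a b Q R q qhat Phat K hric hK, ← one_sub_mul_tsum_of_succ_eq_mul hstep hsum]
  ring

/-- Scalar performance analysis: the infinite-horizon cost of the
certainty-equivalence controller decomposes as the Riccati value at the initial
state plus a correction proportional to the estimation error `q - qhat`. -/
theorem stmt_15 {Ω : Type*} [MeasurableSpace Ω] (μ : Measure Ω) [IsProbabilityMeasure μ]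
    (a b Q R q qhat Phat K : ℝ)
    (ha : 0 < a) (hb : 0 < b) (hQ : 0 < Q) (hR : 0 < R)
    (hq : q ∈ Set.Ioo (0:ℝ) 1)
    (hPhat : 0 < Phat)
    (hric : Phat = Q + a^2*Phat - (1 - qhat) * (a^2*b^2*Phat^2/(R + b^2*Phat)))
    (hK : K = -(a*b*Phat/(R + b^2*Phat)))
    (lam : ℕ → Ω → ℝ) (x : ℕ → Ω → ℝ)
    (hlam : ∀ t, Measurable (lam t)) (hx0 : Measurable (x 0))
    (hBern : ∀ t, ∀ᵐ ω ∂μ, lam t ω = 0 ∨ lam t ω = 1)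
    (h0 : ∀ t, μ {ω | lam t ω = 0} = ENNReal.ofReal q)
    (hiid : iIndepFun lam μ)
    (hindep : ∀ t, IndepFun (lam t) (x t) μ)
    (hx0L2 : MemLp (x 0) 2 μ)
    (hdyn : ∀ t ω, x (t+1) ω = (a + lam t ω * b * K) * x t ω)
    (hms : Tendsto (fun t => ∫ ω, (x t ω)^2 ∂μ) atTop (nhds 0)) :
    ∫ ω, (∑' t : ℕ, (Q * (x t ω)^2 + lam t ω * R * K^2 * (x t ω)^2)) ∂μ
      = Phat * (∫ ω, (x 0 ω)^2 ∂μ)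
        + (q - qhat) * (a^2*b^2*Phat^2/(R + b^2*Phat)) * ∑' t : ℕ, ∫ ω, (x t ω)^2 ∂μ :=
  stmt_15_general μ a b Q R q qhat Phat K hq hric hK lam x hlam hBern h0 hindep hx0L2 hdyn hms
end

section
/- Let a, b, Q, R > 0 with a² > 1 and q ∈ (0,1). If a positive real P solves P = Q + a²P − (1−q)a²b²P²/(R + b²P), then q < 1/a². -/
/-! Writing the Riccati equation as `Q + (a² - 1) P = (1 - q) a² P · b²P / (R + b²P)`, the last
factor is at most `1`, so `Q + (a² - 1) P ≤ (1 - q) a² P`. Since `Q > 0` this gives `q a² P < P`,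
i.e. `q a² < 1`. -/

theorem mul_sq_div_add_mul_le (a b R P : ℝ) (hR : 0 ≤ R) (hP : 0 ≤ P) :
    a^2*b^2*P^2/(R + b^2*P) ≤ a^2*P := by
  have hfrac : b^2*P/(R + b^2*P) ≤ 1 := div_le_one_of_le₀ (by linarith) (by positivity)
  calc a^2*b^2*P^2/(R + b^2*P) = a^2*P * (b^2*P/(R + b^2*P)) := by ring
    _ ≤ a^2*P * 1 := mul_le_mul_of_nonneg_left hfrac (by positivity)
    _ = a^2*P := mul_one _

theorem stmt_17_general (a b Q R q P : ℝ)
    (hQ : 0 < Q) (hR : 0 < R)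
    (ha2 : 1 < a^2) (hq : q ∈ Set.Ioo (0:ℝ) 1)
    (hP : 0 < P)
    (hric : P = Q + a^2*P - (1 - q) * (a^2*b^2*P^2/(R + b^2*P))) :
    q < 1/a^2 := by
  have hbound : Q + (a^2 - 1)*P ≤ (1 - q)*(a^2*P) :=
    calc Q + (a^2 - 1)*P = (1 - q) * (a^2*b^2*P^2/(R + b^2*P)) := by linarith
      _ ≤ (1 - q)*(a^2*P) :=
        mul_le_mul_of_nonneg_left (mul_sq_div_add_mul_le a b R P hR.le hP.le)
          (by linarith [hq.2])
  have hqaP : (q*a^2)*P < 1*P := by linarith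
  rw [lt_div_iff₀ (by positivity)]
  exact lt_of_mul_lt_mul_right hqaP hP.le

/-- Existence of a positive solution to the scalar modified Riccati equation
forces the loss rate below the critical value `1/a²`. -/
theorem stmt_17 (a b Q R q P : ℝ)
    (ha : 0 < a) (hb : 0 < b) (hQ : 0 < Q) (hR : 0 < R)
    (ha2 : 1 < a^2) (hq : q ∈ Set.Ioo (0:ℝ) 1)
    (hP : 0 < P)
    (hric : P = Q + a^2*P - (1 - q) * (a^2*b^2*P^2/(R + b^2*P))) :
    q < 1/a^2 :=
  stmt_17_general a b Q R q P hQ hR ha2 hq hP hric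
end
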